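/- Let Ω ⊂ ℝ² be a bounded open set with smooth boundary and let u be a function that is C² on a neighborhood of the closure of Ω, satisfies -Δu = 1 in Ω and u = 0 on ∂Ω. If the Hessian D²u(x) is negative semidefinite at every point x ∈ ∂Ω, then the Hessian D²u(x) is negative semidefinite at every point x ∈ Ω, i.e. u is concave on Ω. -/

import Mathlib

open MeasureTheory

/-- The Hessian bilinear form of `u` at `x`, evaluated at vectors `v, w`. -/
noncomputable def hessian {n : ℕ} (u : EuclideanSpace ℝ (Fin n) → ℝ)
    (x v w : EuclideanSpace ℝ (Fin n)) : ℝ :=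
  fderiv ℝ (fderiv ℝ u) x v w

/-- The Laplacian of `u` at `x`: the trace of the Hessian. -/
noncomputable def laplacian {n : ℕ} (u : EuclideanSpace ℝ (Fin n) → ℝ)
    (x : EuclideanSpace ℝ (Fin n)) : ℝ :=
  ∑ i : Fin n, hessian u x (EuclideanSpace.single i 1) (EuclideanSpace.single i 1)

/-- `Ω` has smooth boundary: it is the sublevel set of a smooth defining function whose
gradient does not vanish on the boundary. -/
def HasSmoothBoundary {n : ℕ} (Ω : Set (EuclideanSpace ℝ (Fin n))) : Prop :=
  ∃ F : EuclideanSpace ℝ (Fin n) → ℝ, ContDiff ℝ (⊤ : ℕ∞) F ∧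
    Ω = {x | F x < 0} ∧ frontier Ω = {x | F x = 0} ∧
    ∀ x ∈ frontier Ω, fderiv ℝ F x ≠ 0

private lemma quad_nonpos {A B C a b : ℝ} (hA : A ≤ 0) (hC : C ≤ 0) (hB : B^2 ≤ A*C) :
    a^2*A + 2*(a*b)*B + b^2*C ≤ 0 := by
  rcases lt_or_eq_of_le hA with h | h
  · nlinarith [sq_nonneg (A*a + B*b)]
  · have hB2 : B^2 ≤ 0 := by nlinarith
    have hB0 : B = 0 := by
      have h2 := le_antisymm hB2 (sq_nonneg B)
      exact pow_eq_zero_iff two_ne_zero |>.mp h2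
    subst hB0
    nlinarith [sq_nonneg a, sq_nonneg b]

set_option maxHeartbeats 40000000 in
theorem concavity_propagation_torsion_2d
    (Ω : Set (EuclideanSpace ℝ (Fin 2)))
    (hΩo : IsOpen Ω) (hΩb : Bornology.IsBounded Ω) (hΩs : HasSmoothBoundary Ω)
    (u : EuclideanSpace ℝ (Fin 2) → ℝ)
    (hu : ∃ V, IsOpen V ∧ closure Ω ⊆ V ∧ ContDiffOn ℝ 2 u V)
    (hpde : ∀ x ∈ Ω, -laplacian u x = 1)
    (hbd : ∀ x ∈ frontier Ω, u x = 0)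
    (hconc : ∀ x ∈ frontier Ω, ∀ v, hessian u x v v ≤ 0) :
    ∀ x ∈ Ω, ∀ v, hessian u x v v ≤ 0 := by
  obtain ⟨V, hVo, hVc, hC2⟩ := hu
  set e₀ : EuclideanSpace ℝ (Fin 2) := EuclideanSpace.single 0 1 with he₀
  set e₁ : EuclideanSpace ℝ (Fin 2) := EuclideanSpace.single 1 1 with he₁
  set φ : ℂ ≃ₗᵢ[ℝ] EuclideanSpace ℝ (Fin 2) := Complex.orthonormalBasisOneI.repr with hφdef
  set H := fderiv ℝ (fderiv ℝ u) with hHdef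
  have hdec : ∀ w : ℂ, φ w = w.re • e₀ + w.im • e₁ := by
    intro w
    have h := Complex.orthonormalBasisOneI_repr_apply w
    ext j
    have : φ w j = ![w.re, w.im] j := by rw [hφdef]; rw [h]
    rw [this]
    fin_cases j <;> simp [he₀, he₁, EuclideanSpace.single_apply]
  have hvdec : ∀ v : EuclideanSpace ℝ (Fin 2), v = (v 0) • e₀ + (v 1) • e₁ := by
    intro v
    ext j
    fin_cases j <;> simp [he₀, he₁, EuclideanSpace.single_apply]
  have hsym : ∀ x ∈ V, ∀ v w, H x v w = H x w v := by
    intro x hx v w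
    exact ((hC2.contDiffAt (hVo.mem_nhds hx)).isSymmSndFDerivAt (by simp [minSmoothness_of_isRCLikeNormedField])) v w
  have hexp : ∀ x ∈ V, ∀ a b : ℝ,
      hessian u x (a • e₀ + b • e₁) (a • e₀ + b • e₁)
        = a^2 * (H x e₀ e₀) + 2*(a*b) * (H x e₀ e₁) + b^2 * (H x e₁ e₁) := by
    intro x hx a b
    have h10 := hsym x hx e₁ e₀
    simp only [hessian, ← hHdef, map_add, _root_.map_smul, ContinuousLinearMap.add_apply,
      ContinuousLinearMap.coe_smul', Pi.smul_apply, smul_eq_mul]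
    linear_combination (a*b) * h10
  -- the PDE in terms of H
  have hlap : ∀ x ∈ Ω, H x e₀ e₀ + H x e₁ e₁ = -1 := by
    intro x hx
    have h := hpde x hx
    simp only [laplacian, hessian, ← hHdef, Fin.sum_univ_two, ← he₀, ← he₁] at h
    linarith
  -- continuity of the second derivative on V
  have hH1 : ContDiffOn ℝ 1 (fderiv ℝ u) V := hC2.fderiv_of_isOpen hVo (by norm_num)
  have hHc : ContinuousOn H V := by
    rw [hHdef]; exact hH1.continuousOn_fderiv_of_isOpen hVo le_rfl
  have hHij : ∀ a b : EuclideanSpace ℝ (Fin 2), ContinuousOn (fun x => H x a b) V :=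
    fun a b => (hHc.clm_apply continuousOn_const).clm_apply continuousOn_const
  -- the trace identity extends to the closure
  have htr : ∀ x ∈ closure Ω, H x e₀ e₀ + H x e₁ e₁ = -1 := by
    intro x hx
    have hxV : x ∈ V := hVc hx
    haveI : (nhdsWithin x Ω).NeBot := mem_closure_iff_nhdsWithin_neBot.1 hx
    have h1 : Filter.Tendsto (fun y => H y e₀ e₀ + H y e₁ e₁) (nhdsWithin x Ω)
        (nhds (H x e₀ e₀ + H x e₁ e₁)) := by
      have := ((hHij e₀ e₀).add (hHij e₁ e₁)).continuousAt (hVo.mem_nhds hxV)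
      exact this.continuousWithinAt
    have h2 : Filter.Tendsto (fun y => H y e₀ e₀ + H y e₁ e₁) (nhdsWithin x Ω) (nhds (-1)) := by
      apply Filter.Tendsto.congr' _ tendsto_const_nhds
      exact eventually_nhdsWithin_of_forall (fun y hy => (hlap y hy).symm)
    exact tendsto_nhds_unique h1 h2
  -- differentiability of the first derivative
  have hu1 : ∀ x ∈ V, HasFDerivAt (fderiv ℝ u) (H x) x := by
    intro x hx
    have h1 : ContDiffAt ℝ 1 (fderiv ℝ u) x :=
      (hC2.contDiffAt (hVo.mem_nhds hx)).fderiv_right (by norm_num)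
    exact (h1.differentiableAt one_ne_zero).hasFDerivAt
  -- the holomorphic function and its derivative
  set f : ℂ → ℂ := fun z => ((fderiv ℝ u (φ z) e₀ : ℝ) : ℂ)
      - Complex.I * ((fderiv ℝ u (φ z) e₁ : ℝ) : ℂ)
      + ((1/2 : ℝ) : ℂ) * (starRingEnd ℂ) z with hfdef
  set Fc : ℂ → ℂ := fun z => ((H (φ z) e₀ e₀ + 1/2 : ℝ) : ℂ)
      - Complex.I * ((H (φ z) e₀ e₁ : ℝ) : ℂ) with hFcdef
  set φL : ℂ →L[ℝ] EuclideanSpace ℝ (Fin 2) := (φ : ℂ →L[ℝ] EuclideanSpace ℝ (Fin 2)) with hφL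
  have hφLd : ∀ w : ℂ, φL w = w.re • e₀ + w.im • e₁ := fun w => hdec w
  set c₀ : (EuclideanSpace ℝ (Fin 2) →L[ℝ] ℝ) →L[ℝ] ℝ := ContinuousLinearMap.apply ℝ ℝ e₀ with hc₀
  set c₁ : (EuclideanSpace ℝ (Fin 2) →L[ℝ] ℝ) →L[ℝ] ℝ := ContinuousLinearMap.apply ℝ ℝ e₁ with hc₁
  have hder : ∀ z : ℂ, φ z ∈ Ω → HasDerivAt f (Fc z) z := by
    intro z hz
    have hzcl : φ z ∈ closure Ω := subset_closure hz
    have hzV : φ z ∈ V := hVc hzcl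
    have hφd : HasFDerivAt φ φL z := φ.hasFDerivAt
    have h0 : HasFDerivAt (fun w => fderiv ℝ u (φ w)) ((H (φ z)).comp φL) z :=
      (hu1 _ hzV).comp z hφd
    have hp : HasFDerivAt (fun w => fderiv ℝ u (φ w) e₀)
        (c₀.comp ((H (φ z)).comp φL)) z := c₀.hasFDerivAt.comp z h0
    have hq : HasFDerivAt (fun w => fderiv ℝ u (φ w) e₁)
        (c₁.comp ((H (φ z)).comp φL)) z := c₁.hasFDerivAt.comp z h0
    have h1 : HasFDerivAt (fun w => ((fderiv ℝ u (φ w) e₀ : ℝ) : ℂ))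
        (Complex.ofRealCLM.comp (c₀.comp ((H (φ z)).comp φL))) z :=
      Complex.ofRealCLM.hasFDerivAt.comp z hp
    have h2 : HasFDerivAt (fun w => ((fderiv ℝ u (φ w) e₁ : ℝ) : ℂ))
        (Complex.ofRealCLM.comp (c₁.comp ((H (φ z)).comp φL))) z :=
      Complex.ofRealCLM.hasFDerivAt.comp z hq
    have h2' := h2.const_mul Complex.I
    have h3 : HasFDerivAt (fun w : ℂ => (starRingEnd ℂ) w)
        (Complex.conjCLE : ℂ →L[ℝ] ℂ) z := Complex.conjCLE.hasFDerivAt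
    have h3' := h3.const_mul (((1/2 : ℝ) : ℂ))
    have htot := (h1.sub h2').add h3'
    have hkey : (Complex.ofRealCLM.comp (c₀.comp ((H (φ z)).comp φL))
          - Complex.I • (Complex.ofRealCLM.comp (c₁.comp ((H (φ z)).comp φL)))
          + ((1/2 : ℝ) : ℂ) • (Complex.conjCLE : ℂ →L[ℝ] ℂ))
        = (ContinuousLinearMap.smulRight (1 : ℂ →L[ℂ] ℂ) (Fc z)).restrictScalars ℝ := by
      apply ContinuousLinearMap.ext
      intro w
      have htrz := htr (φ z) hzcl
      have hsymz := hsym (φ z) hzV e₁ e₀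
      simp only [ContinuousLinearMap.add_apply, ContinuousLinearMap.sub_apply,
        ContinuousLinearMap.smul_apply, ContinuousLinearMap.coe_comp', Function.comp_apply,
        ContinuousLinearMap.coe_restrictScalars', ContinuousLinearMap.smulRight_apply,
        ContinuousLinearMap.one_apply, hc₀, hc₁, ContinuousLinearMap.apply_apply,
        Complex.ofRealCLM_apply, Complex.conjCLE_apply, smul_eq_mul]
      rw [hφLd w]
      simp only [map_add, _root_.map_smul, ContinuousLinearMap.add_apply,
        ContinuousLinearMap.coe_smul', Pi.smul_apply, smul_eq_mul]
      rw [hFcdef]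
      have hE : H (φ z) e₁ e₁ = -1 - H (φ z) e₀ e₀ := by linarith
      rw [hsymz, hE]
      simp only [Complex.ext_iff, Complex.add_re, Complex.add_im, Complex.sub_re, Complex.sub_im,
        Complex.mul_re, Complex.mul_im, Complex.ofReal_re, Complex.ofReal_im, Complex.I_re,
        Complex.I_im, Complex.conj_re, Complex.conj_im, ContinuousLinearEquiv.coe_coe, Complex.conjCLE_apply]
      constructor <;> ring
    rw [hkey] at htot
    have : HasFDerivAt f (ContinuousLinearMap.smulRight (1 : ℂ →L[ℂ] ℂ) (Fc z)) z :=
      hasFDerivAt_of_restrictScalars ℝ (f' := ContinuousLinearMap.smulRight (1 : ℂ →L[ℂ] ℂ) (Fc z)) htot rfl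
    simpa using this.hasDerivAt
  -- move to the complex plane
  set W : Set ℂ := ⇑φ ⁻¹' Ω with hWdef
  have hWo : IsOpen W := hΩo.preimage φ.continuous
  have hWb : Bornology.IsBounded W := by
    have himg : W = ⇑φ.symm '' Ω := by
      ext w
      constructor
      · intro h
        exact ⟨φ w, h, by simp⟩
      · rintro ⟨y, hy, rfl⟩
        simpa [hWdef] using hy
    rw [himg]
    exact φ.symm.lipschitz.isBounded_image hΩb
  have hcoeh : ⇑φ.toHomeomorph = ⇑φ := rfl
  have hfront : frontier W = ⇑φ ⁻¹' frontier Ω := by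
    have h1 := φ.toHomeomorph.preimage_frontier Ω
    rw [hcoeh] at h1
    rw [hWdef, ← h1]
  have hclos : closure W = ⇑φ ⁻¹' closure Ω := by
    have h1 := φ.toHomeomorph.preimage_closure Ω
    rw [hcoeh] at h1
    rw [hWdef, ← h1]
  -- Fc is holomorphic in W and continuous up to the closure
  have hFanW : DifferentiableOn ℂ Fc W := by
    have hfdiff : DifferentiableOn ℂ f W := fun z hz =>
      ((hder z hz).differentiableAt).differentiableWithinAt
    have han : AnalyticOnNhd ℂ f W := hfdiff.analyticOnNhd hWo
    have hdr : DifferentiableOn ℂ (deriv f) W := han.deriv.differentiableOn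
    exact hdr.congr (fun z hz => ((hder z hz).deriv).symm)
  have hFcont : ContinuousOn Fc (closure W) := by
    have hsub : closure W ⊆ ⇑φ ⁻¹' V := by
      rw [hclos]
      exact fun z hz => hVc hz
    apply ContinuousOn.mono _ hsub
    have hφc : ContinuousOn (fun z : ℂ => H (φ z)) (⇑φ ⁻¹' V) :=
      hHc.comp φ.continuous.continuousOn (fun z hz => hz)
    have hA : ContinuousOn (fun z : ℂ => H (φ z) e₀ e₀) (⇑φ ⁻¹' V) :=
      (hφc.clm_apply continuousOn_const).clm_apply continuousOn_const
    have hB : ContinuousOn (fun z : ℂ => H (φ z) e₀ e₁) (⇑φ ⁻¹' V) :=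
      (hφc.clm_apply continuousOn_const).clm_apply continuousOn_const
    rw [hFcdef]
    exact ((Complex.continuous_ofReal.comp_continuousOn (hA.add continuousOn_const)).sub
      (continuousOn_const.mul (Complex.continuous_ofReal.comp_continuousOn hB)))
  have hdd : DiffContOnCl ℂ Fc W := ⟨hFanW, hFcont⟩
  -- the square of the norm of Fc
  have hnorm : ∀ z : ℂ, ‖Fc z‖^2 = (H (φ z) e₀ e₀ + 1/2)^2 + (H (φ z) e₀ e₁)^2 := by
    intro z
    rw [hFcdef]
    rw [Complex.sq_norm, Complex.normSq_apply]
    simp only [Complex.sub_re, Complex.sub_im, Complex.mul_re, Complex.mul_im,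
      Complex.ofReal_re, Complex.ofReal_im, Complex.I_re, Complex.I_im]
    ring
  -- boundary bound
  have hbound : ∀ z ∈ frontier W, ‖Fc z‖ ≤ 1/2 := by
    intro z hz
    rw [hfront] at hz
    have hz' : φ z ∈ frontier Ω := hz
    have hxcl : φ z ∈ closure Ω := frontier_subset_closure hz'
    have hxV : φ z ∈ V := hVc hxcl
    have htrz := htr (φ z) hxcl
    have k1 := hconc (φ z) hz' ((H (φ z) e₀ e₁) • e₀ + (-(H (φ z) e₀ e₀)) • e₁)
    rw [hexp (φ z) hxV] at k1
    have k2 := hconc (φ z) hz' ((-(H (φ z) e₁ e₁)) • e₀ + (H (φ z) e₀ e₁) • e₁)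
    rw [hexp (φ z) hxV] at k2
    have hn := hnorm z
    have hr0 := norm_nonneg (Fc z)
    obtain ⟨A, hA'⟩ : ∃ a, H (φ z) e₀ e₀ = a := ⟨_, rfl⟩
    obtain ⟨B, hB'⟩ : ∃ a, H (φ z) e₀ e₁ = a := ⟨_, rfl⟩
    obtain ⟨C, hC'⟩ : ∃ a, H (φ z) e₁ e₁ = a := ⟨_, rfl⟩
    obtain ⟨r, hr'⟩ : ∃ r, ‖Fc z‖ = r := ⟨_, rfl⟩
    rw [hA', hB', hC'] at k1
    rw [hA', hB', hC'] at k2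
    rw [hA', hC'] at htrz
    rw [hr', hA', hB'] at hn
    rw [hr'] at hr0 ⊢
    have hCC : C = -1 - A := by linarith
    rw [hCC] at k1 k2
    have hT : A + A^2 + B^2 ≤ 0 := by nlinarith [k1, k2]
    nlinarith [hT, hn, hr0]
  -- conclusion via the maximum modulus principle
  intro x hx v
  have hz : φ.symm x ∈ W := by
    have : φ (φ.symm x) = x := φ.apply_symm_apply x
    simp only [hWdef, Set.mem_preimage, this]
    exact hx
  have hcl : φ.symm x ∈ closure W := subset_closure hz
  have hFb : ‖Fc (φ.symm x)‖ ≤ 1/2 :=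
    Complex.norm_le_of_forall_mem_frontier_norm_le hWb hdd hbound hcl
  have hn := hnorm (φ.symm x)
  rw [φ.apply_symm_apply x] at hn
  have hxV : x ∈ V := hVc (subset_closure hx)
  have htrx := htr x (subset_closure hx)
  have hv : v = (v 0) • e₀ + (v 1) • e₁ := hvdec v
  rw [hv, hexp x hxV]
  obtain ⟨A, hA'⟩ : ∃ a, H x e₀ e₀ = a := ⟨_, rfl⟩
  obtain ⟨B, hB'⟩ : ∃ a, H x e₀ e₁ = a := ⟨_, rfl⟩
  obtain ⟨C, hC'⟩ : ∃ a, H x e₁ e₁ = a := ⟨_, rfl⟩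
  obtain ⟨r, hr'⟩ : ∃ r, ‖Fc (φ.symm x)‖ = r := ⟨_, rfl⟩
  have hr0 := norm_nonneg (Fc (φ.symm x))
  rw [hA', hC'] at htrx
  rw [hA', hB', hC']
  rw [hA', hB'] at hn
  rw [hr'] at hFb hn hr0
  have hsq : (A + 1/2)^2 + B^2 ≤ 1/4 := by nlinarith [hFb, hn, hr0]
  have hCeq : C = -1 - A := by linarith
  have hA : A ≤ 0 := by nlinarith [sq_nonneg B]
  have hCn : C ≤ 0 := by rw [hCeq]; nlinarith [sq_nonneg B]
  have hB : B^2 ≤ A * C := by rw [hCeq]; nlinarith [hsq]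
  exact quad_nonpos hA hCn hB
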